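/- arXiv:1912.03101 — 5 statements merged into one kernel-verified Lean document; each statement's English description precedes it below -/
import Mathlib

section
/- (Chan–Lam) Let n and i be natural numbers with 2i ≤ n. For each j with 0 ≤ j ≤ i, let σ_j be the permutation of {0,1,…,n−1} that is the product of the j disjoint transpositions (2t, 2t+1) for t = 0,…,j−1 (so σ_j has cycle type 2^j 1^{n−2j}, and σ_0 is the identity). Then for every irreducible finite-dimensional complex representation of the symmetric group S_n with character χ, there exists a natural number m such that Σ_{j=0}^{i} C(i,j) · χ(σ_j) = 2^i · m. In particular this sum is a non-negative integer divisible by 2^i. -/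
open CategoryTheory

/-- The transposition `(2t, 2t+1)` of `{0, 1, …, n−1}` (the identity if `2t+1 ≥ n`). -/
def tau (n t : ℕ) : Equiv.Perm (Fin n) :=
  if h : 2 * t + 1 < n then Equiv.swap ⟨2 * t, by omega⟩ ⟨2 * t + 1, h⟩ else 1

/-- The permutation `σ_j = (0 1)(2 3)⋯(2j−2 2j−1)` of `{0, 1, …, n−1}`,
a product of `j` disjoint transpositions. -/
def sigma (n j : ℕ) : Equiv.Perm (Fin n) :=
  ((List.range j).map (tau n)).prod

/-!
Let `τ_t = (2t, 2t+1)`. These transpositions commute and square to `1`, so in the commutative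
group algebra of the group they generate, `P = ∏_{t<i} (1 + τ_t)` expands to `∑_{T ⊆ [0,i)} τ_T`
with `τ_T = ∏_{t∈T} τ_t`, and `(1 + τ_t)² = 2(1 + τ_t)` gives `P² = 2^i P`. Hence `2^{-i} P` acts
on `V` as an idempotent, whose trace is its rank, so `tr P ∈ 2^i ℕ`. Finally `τ_T` has cycle type
`2^{|T|}`, so it is conjugate to `σ_{|T|}`, and there are `C(i,j)` subsets `T` with `|T| = j`.
-/

open Finset Equiv

theorem Finset.prod_one_add_sq_of_mul_self_eq_one {ι R : Type*} [CommSemiring R] (s : Finset ι)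
    {a : ι → R} (ha : ∀ t ∈ s, a t * a t = 1) :
    (∏ t ∈ s, (1 + a t)) ^ 2 = 2 ^ #s * ∏ t ∈ s, (1 + a t) := by
  rw [← prod_pow, ← prod_const, ← prod_mul_distrib]
  refine prod_congr rfl fun t ht => ?_
  calc (1 + a t) ^ 2 = 1 + 2 * a t + a t * a t := by ring
    _ = 2 * (1 + a t) := by rw [ha t ht]; ring

theorem LinearMap.exists_trace_eq_mul_natCast_of_mul_self_eq_smul {k V : Type*} [Field k]
    [AddCommGroup V] [Module k V] [FiniteDimensional k V] {f : Module.End k V} {c : k}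
    (hc : c ≠ 0) (hf : f * f = c • f) : ∃ m : ℕ, LinearMap.trace k V f = c * m := by
  have hidem : IsIdempotentElem (c⁻¹ • f) := by
    rw [IsIdempotentElem, smul_mul_smul_comm, hf, smul_smul, mul_assoc, inv_mul_cancel₀ hc,
      mul_one]
  obtain ⟨p, hp⟩ := (LinearMap.isProj_iff_isIdempotentElem _).mpr hidem
  refine ⟨Module.finrank k p, ?_⟩
  rw [← hp.trace, map_smul, smul_eq_mul, mul_inv_cancel_left₀ hc]

theorem Representation.exists_sum_powerset_character_prod_eq_two_pow_mul {k H V ι : Type*}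
    [Field k] [NeZero (2 : k)] [CommGroup H] [AddCommGroup V] [Module k V] [FiniteDimensional k V]
    (ρ : Representation k H V) (s : Finset ι) {g : ι → H} (hg : ∀ t ∈ s, g t * g t = 1) :
    ∃ m : ℕ, ∑ T ∈ s.powerset, ρ.character (∏ t ∈ T, g t) = 2 ^ #s * m := by
  set P := ∏ t ∈ s, (1 + MonoidAlgebra.of k H (g t))
  have hP : ρ.asAlgebraHom P = ∑ T ∈ s.powerset, ρ (∏ t ∈ T, g t) := by
    simp only [P, prod_one_add, map_sum, ← map_prod, Representation.asAlgebraHom_of]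
  have hP_sq : P * P = (2 : k) ^ #s • P := by
    rw [← sq, prod_one_add_sq_of_mul_self_eq_one s fun t ht => by rw [← map_mul, hg t ht, map_one],
      Algebra.smul_def, map_pow, map_ofNat]
  obtain ⟨m, hm⟩ := LinearMap.exists_trace_eq_mul_natCast_of_mul_self_eq_smul
    (pow_ne_zero #s (NeZero.ne (2 : k))) (f := ρ.asAlgebraHom P)
    (by rw [← map_mul, hP_sq, map_smul])
  refine ⟨m, ?_⟩
  rw [← hm, hP, map_sum]
  rfl

theorem FDRep.char_eq_of_isConj {k G : Type*} [Field k] [Group G] (V : FDRep k G) {g h : G}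
    (hgh : IsConj g h) : V.character g = V.character h := by
  obtain ⟨c, rfl⟩ := isConj_iff.mp hgh
  exact (V.char_conj g c).symm

theorem tau_disjoint (n : ℕ) {s t : ℕ} (hst : s ≠ t) : Perm.Disjoint (tau n s) (tau n t) := by
  unfold tau
  split_ifs
  · intro x
    by_cases hx : (x : ℕ) = 2 * s ∨ (x : ℕ) = 2 * s + 1
    · right
      apply swap_apply_of_ne_of_ne <;> simp only [ne_eq, Fin.ext_iff] <;> omega
    · left
      apply swap_apply_of_ne_of_ne <;> simp only [ne_eq, Fin.ext_iff] <;> omega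
  all_goals first | exact Perm.disjoint_one_right _ | exact Perm.disjoint_one_left _

theorem tau_commute (n s t : ℕ) : Commute (tau n s) (tau n t) := by
  rcases eq_or_ne s t with rfl | hst
  · rfl
  · exact (tau_disjoint n hst).commute

theorem pairwise_commute_tau (n : ℕ) (T : Set ℕ) : T.Pairwise (Function.onFun Commute (tau n)) :=
  fun s _ t _ _ => tau_commute n s t

theorem tau_mul_self (n t : ℕ) : tau n t * tau n t = 1 := by
  unfold tau
  split_ifs
  · exact swap_mul_self _ _
  · exact one_mul 1

theorem cycleType_tau {n t : ℕ} (ht : 2 * t + 1 < n) : (tau n t).cycleType = {2} := by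
  have hne : (⟨2 * t, by omega⟩ : Fin n) ≠ ⟨2 * t + 1, ht⟩ := by simp [Fin.ext_iff]
  rw [tau, dif_pos ht, (Perm.isCycle_swap hne).cycleType, Perm.card_support_swap hne]

def tauProd (n : ℕ) (T : Finset ℕ) : Perm (Fin n) :=
  T.noncommProd (tau n) (pairwise_commute_tau n _)

theorem sigma_eq_tauProd_range (n j : ℕ) : sigma n j = tauProd n (range j) := by
  rw [sigma, tauProd, ← List.toFinset_range, noncommProd_toFinset _ _ _ List.nodup_range]

theorem cycleType_tauProd {n : ℕ} {T : Finset ℕ} (hT : ∀ t ∈ T, 2 * t + 1 < n) :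
    (tauProd n T).cycleType = Multiset.replicate #T 2 := by
  rw [tauProd, Perm.Disjoint.cycleType_noncommProd fun s _ t _ hst => tau_disjoint n hst,
    sum_congr rfl fun t ht => cycleType_tau (hT t ht), sum_const, Multiset.nsmul_singleton]

theorem isConj_tauProd_sigma_card {n i : ℕ} (hi : 2 * i ≤ n) {T : Finset ℕ} (hT : T ⊆ range i) :
    IsConj (tauProd n T) (sigma n #T) := by
  have hTi : #T ≤ i := by simpa using card_le_card hT
  rw [Perm.isConj_iff_cycleType_eq, sigma_eq_tauProd_range,
    cycleType_tauProd fun t ht => by have := mem_range.mp (hT ht); omega,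
    cycleType_tauProd fun t ht => by have := mem_range.mp ht; omega, card_range]

def tauSubgroup (n : ℕ) : Subgroup (Perm (Fin n)) := Subgroup.closure (Set.range (tau n))

instance (n : ℕ) : IsMulCommutative (tauSubgroup n) :=
  Subgroup.isMulCommutative_closure <| by
    rintro _ ⟨s, rfl⟩ _ ⟨t, rfl⟩
    exact tau_commute n s t

def tauGen (n t : ℕ) : tauSubgroup n := ⟨tau n t, Subgroup.subset_closure ⟨t, rfl⟩⟩

-- turns the `IsMulCommutative` instance above into `CommGroup (tauSubgroup n)`
open scoped IsMulCommutative

theorem coe_prod_tauGen (n : ℕ) (T : Finset ℕ) :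
    ((∏ t ∈ T, tauGen n t : tauSubgroup n) : Perm (Fin n)) = tauProd n T := by
  induction T using Finset.induction_on with
  | empty => rw [prod_empty, tauProd, noncommProd_empty]; rfl
  | insert a T ha ih =>
    rw [prod_insert ha, Subgroup.coe_mul, ih, tauProd, tauProd,
      noncommProd_insert_of_notMem _ _ _ _ ha]
    rfl

theorem chan_lam_irreducible_general (n i : ℕ) (hi : 2 * i ≤ n)
    (V : FDRep ℂ (Equiv.Perm (Fin n))) :
    ∃ m : ℕ, ∑ j ∈ Finset.range (i + 1),
        (i.choose j : ℂ) * V.character (sigma n j) = 2 ^ i * (m : ℂ) := by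
  set ρ : Representation ℂ (tauSubgroup n) V := V.ρ.comp (tauSubgroup n).subtype
  obtain ⟨m, hm⟩ := ρ.exists_sum_powerset_character_prod_eq_two_pow_mul (range i)
    (g := tauGen n) fun t _ => Subtype.ext (tau_mul_self n t)
  refine ⟨m, ?_⟩
  calc _ = ∑ T ∈ (range i).powerset, V.character (sigma n #T) := by
        rw [sum_powerset_apply_card (fun j => V.character (sigma n j)), card_range]
        simp only [nsmul_eq_mul]
    _ = ∑ T ∈ (range i).powerset, ρ.character (∏ t ∈ T, tauGen n t) := by
        refine sum_congr rfl fun T hT => ?_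
        rw [Representation.character, MonoidHom.comp_apply, Subgroup.coe_subtype,
          coe_prod_tauGen, ← FDRep.character,
          V.char_eq_of_isConj (isConj_tauProd_sigma_card hi (mem_powerset.mp hT))]
    _ = 2 ^ i * m := by rw [hm, card_range]

/-- (Chan–Lam) For `2i ≤ n` and any irreducible finite-dimensional complex representation of
`S_n` with character `χ`, the quantity `∑_{j=0}^{i} C(i,j) · χ(σ_j)` is `2^i` times a
non-negative integer. -/
theorem chan_lam_irreducible (n i : ℕ) (hi : 2 * i ≤ n)
    (V : FDRep ℂ (Equiv.Perm (Fin n))) [Simple V] :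
    ∃ m : ℕ, ∑ j ∈ Finset.range (i + 1),
        (i.choose j : ℂ) * V.character (sigma n j) = 2 ^ i * (m : ℂ) :=
  chan_lam_irreducible_general n i hi V
end

section
/- Let G be a simple graph on a finite vertex set V that is acyclic (a forest), and let L be its Laplacian matrix (L_{v,v} = deg(v), and for u ≠ v, L_{u,v} = −1 if uv is an edge of G and 0 otherwise). If ψ is a permutation of V for which there exists a vertex v with ψ(v) ≠ v and ψ(ψ(v)) ≠ v (i.e., ψ has a cycle of length at least 3), then ∏_{u ∈ V} L_{u, ψ(u)} = 0. -/
/-!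
If every factor `L_{u, ψ u}` is nonzero, then every vertex moved by `ψ` is adjacent to its image.
Following the orbit `ψ v, ψ² v, …, v` of a point on a cycle of length at least 3 then gives a walk
from `ψ v` to `v` that never uses the edge `v — ψ v`, so this edge is not a bridge and `G`
cannot be a forest.
-/

namespace SimpleGraph

variable {V : Type*}

theorem lapMatrix_apply_of_ne_of_not_adj {R : Type*} [AddGroupWithOne R] [Fintype V]
    [DecidableEq V] (G : SimpleGraph V) [DecidableRel G.Adj] {u w : V} (hne : u ≠ w)
    (hadj : ¬G.Adj u w) : G.lapMatrix R u w = 0 := by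
  simp [lapMatrix, degMatrix, adjMatrix, hne, hadj]

theorem reachable_iterate_of_forall_adj (G : SimpleGraph V) {f : V → V} {x : V} {m n : ℕ}
    (hmn : m ≤ n) (hadj : ∀ k, m ≤ k → k < n → G.Adj (f^[k] x) (f^[k + 1] x)) :
    G.Reachable (f^[m] x) (f^[n] x) := by
  induction n, hmn using Nat.le_induction with
  | base => rfl
  | succ n hmn ih =>
    exact (ih fun k hmk hkn => hadj k hmk (by omega)).trans (hadj n hmn n.lt_succ_self).reachable

theorem not_isAcyclic_of_forall_adj_perm [Finite V] (G : SimpleGraph V) (ψ : Equiv.Perm V)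
    (hadj : ∀ u, ψ u ≠ u → G.Adj u (ψ u)) {v : V} (h1 : ψ v ≠ v) (h2 : ψ (ψ v) ≠ v) :
    ¬G.IsAcyclic := by
  intro hG
  set H := G.deleteEdges {s(v, ψ v)}
  have hH : ∀ u ≠ v, ψ u ≠ u → H.Adj u (ψ u) := by
    intro u hu hmoved
    rw [deleteEdges_adj, Set.mem_singleton_iff, Sym2.eq_iff]
    refine ⟨hadj u hmoved, ?_⟩
    rintro (⟨rfl, -⟩ | ⟨rfl, h⟩)
    exacts [hu rfl, h2 h]
  have hp : 0 < Function.minimalPeriod ψ v :=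
    Function.minimalPeriod_pos_of_mem_periodicPts (ψ.injective.mem_periodicPts v)
  have horbit : H.Reachable (ψ^[1] v) (ψ^[Function.minimalPeriod ψ v] v) := by
    refine H.reachable_iterate_of_forall_adj hp fun k hk hkp => ?_
    rw [Function.iterate_succ_apply']
    refine hH _ (Function.not_isPeriodicPt_of_pos_of_lt_minimalPeriod (by omega) hkp) ?_
    rw [← Function.iterate_succ_apply' ψ k, Function.iterate_succ_apply]
    exact (ψ.injective.iterate k).ne h1
  rw [Function.iterate_one, Function.iterate_minimalPeriod] at horbit
  exact isBridge_iff.mp (isAcyclic_iff_forall_adj_isBridge.mp hG (hadj v h1)) horbit.symm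

end SimpleGraph

/-- If `G` is a forest and the permutation `ψ` of the vertices has a cycle of length at least 3,
then the product `∏_u L_{u, ψ(u)}` of Laplacian entries vanishes. -/
theorem lapMatrix_prod_eq_zero_of_long_cycle {V : Type} [Fintype V] [DecidableEq V]
    (G : SimpleGraph V) [DecidableRel G.Adj] (hG : G.IsAcyclic)
    (ψ : Equiv.Perm V) (v : V) (h1 : ψ v ≠ v) (h2 : ψ (ψ v) ≠ v) :
    ∏ u, G.lapMatrix ℝ u (ψ u) = 0 := by
  by_contra hprod
  refine G.not_isAcyclic_of_forall_adj_perm ψ (fun u hu => ?_) h1 h2 hG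
  by_contra hadj
  exact hprod (Finset.prod_eq_zero (Finset.mem_univ u)
    (G.lapMatrix_apply_of_ne_of_not_adj (Ne.symm hu) hadj))
end

section
/- Let G be a simple graph on a finite vertex set V that is acyclic (a forest), let q be a real number, and let 𝓛^q = I + q²(D − I) − qA be its q-Laplacian (so 𝓛^q_{v,v} = 1 + q²(deg(v) − 1), and for u ≠ v, 𝓛^q_{u,v} = −q if uv is an edge of G and 0 otherwise). If ψ is a permutation of V for which there exists a vertex v with ψ(v) ≠ v and ψ(ψ(v)) ≠ v (i.e., ψ has a cycle of length at least 3), then ∏_{u ∈ V} 𝓛^q_{u, ψ(u)} = 0. -/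
/-!
A nonzero product `∏_u 𝓛^q_{u, ψ u}` forces every vertex moved by `ψ` to be sent to a
neighbour. In a forest such a permutation is an involution: if `v ↦ ψ v ↦ ψ² v ≠ v`, then
following the cycle of `ψ` from `ψ v` back to `v` never uses the edge `v – ψ v` (it could only
be crossed as `ψ v ↦ v`), so `v` and `ψ v` stay connected after deleting that edge, which is
then not a bridge.
-/
/-- The `q`-Laplacian `𝓛^q = I + q²(D − I) − qA` of a simple graph `G`. -/
def qLap {V : Type} [Fintype V] [DecidableEq V] (G : SimpleGraph V) [DecidableRel G.Adj]
    (q : ℝ) : Matrix V V ℝ :=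
  1 + q ^ 2 • (G.degMatrix ℝ - 1) - q • G.adjMatrix ℝ

namespace SimpleGraph

variable {V : Type*}

lemma reachable_of_pow_apply_eq {G : SimpleGraph V} {ψ : Equiv.Perm V} {a : V}
    (hadj : ∀ u, u ≠ a → ψ u ≠ u → G.Adj u (ψ u)) :
    ∀ (k : ℕ) {x : V}, (ψ ^ k) x = a → G.Reachable x a
  | 0, x, hx => by rw [← hx]; rfl
  | k + 1, x, hx => by
    have hψx : G.Reachable (ψ x) a :=
      reachable_of_pow_apply_eq hadj k (by rwa [pow_succ, Equiv.Perm.mul_apply] at hx)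
    by_cases hxa : x = a
    · rw [hxa]
    by_cases hfix : ψ x = x
    · rwa [hfix] at hψx
    exact (hadj x hxa hfix).reachable.trans hψx

theorem IsAcyclic.apply_apply_eq_self_of_forall_adj [Finite V] {G : SimpleGraph V}
    (hG : G.IsAcyclic) {ψ : Equiv.Perm V} (hadj : ∀ u, ψ u ≠ u → G.Adj u (ψ u)) (v : V) :
    ψ (ψ v) = v := by
  by_contra h2
  have h1 : ψ v ≠ v := fun h ↦ h2 (by rw [h, h])
  have hbridge := isAcyclic_iff_forall_adj_isBridge.mp hG (hadj v h1)
  refine (isBridge_iff.mp hbridge) (Reachable.symm ?_)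
  obtain ⟨k, hk⟩ :=
    (Equiv.Perm.sameCycle_apply_left.mpr (Equiv.Perm.SameCycle.refl ψ v)).exists_nat_pow_eq
  refine reachable_of_pow_apply_eq (fun u hu hfix ↦ ?_) k hk
  -- For `u ≠ v`, `s(u, ψ u) = s(v, ψ v)` forces `u = ψ v` and `ψ u = v`, i.e. `ψ² v = v`.
  refine (deleteEdges_adj).mpr ⟨hadj u hfix, fun he ↦ ?_⟩
  rcases Sym2.eq_iff.mp (Set.mem_singleton_iff.mp he) with ⟨rfl, -⟩ | ⟨rfl, hψu⟩
  exacts [hu rfl, h2 hψu]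

end SimpleGraph

lemma adj_of_qLap_apply_ne_zero {V : Type} [Fintype V] [DecidableEq V] {G : SimpleGraph V}
    [DecidableRel G.Adj] {q : ℝ} {u w : V} (huw : u ≠ w) (h : qLap G q u w ≠ 0) :
    G.Adj u w := by
  by_contra hnadj
  simp [qLap, Matrix.one_apply_ne huw, SimpleGraph.degMatrix, Matrix.diagonal_apply_ne _ huw,
    hnadj] at h

theorem qLap_prod_eq_zero_of_long_cycle_general {V : Type} [Fintype V] [DecidableEq V]
    (G : SimpleGraph V) [DecidableRel G.Adj] (hG : G.IsAcyclic) (q : ℝ)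
    (ψ : Equiv.Perm V) (v : V) (h2 : ψ (ψ v) ≠ v) :
    ∏ u, qLap G q u (ψ u) = 0 := by
  by_contra hprod
  have hadj : ∀ u, ψ u ≠ u → G.Adj u (ψ u) := fun u hu ↦
    adj_of_qLap_apply_ne_zero (Ne.symm hu) (Finset.prod_ne_zero_iff.mp hprod u
      (Finset.mem_univ u))
  exact h2 (hG.apply_apply_eq_self_of_forall_adj hadj v)

/-- If `G` is a forest and the permutation `ψ` of the vertices has a cycle of length at least 3,
then the product `∏_u 𝓛^q_{u, ψ(u)}` of `q`-Laplacian entries vanishes. -/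
theorem qLap_prod_eq_zero_of_long_cycle {V : Type} [Fintype V] [DecidableEq V]
    (G : SimpleGraph V) [DecidableRel G.Adj] (hG : G.IsAcyclic) (q : ℝ)
    (ψ : Equiv.Perm V) (v : V) (h1 : ψ v ≠ v) (h2 : ψ (ψ v) ≠ v) :
    ∏ u, qLap G q u (ψ u) = 0 :=
  qLap_prod_eq_zero_of_long_cycle_general G hG q ψ v h2
end

section
/- Let G be a simple graph on a finite vertex set V that is acyclic (a forest), let q be a real number, and let 𝓛^q = I + q²(D − I) − qA be its q-Laplacian. Then for every function f from the permutations of V to the complex numbers, Σ_{ψ ∈ Sym(V)} f(ψ) · ∏_{v ∈ V} 𝓛^q_{v, ψ(v)} = Σ_{ψ ∈ M} f(ψ) · q^{s(ψ)} · ∏_{v : ψ(v) = v} (1 + q²(deg(v) − 1)), where M is the set of involutions ψ of V (ψ ∘ ψ = id) all of whose 2-cycles {v, ψ(v)} are edges of G, and s(ψ) = |{v ∈ V : ψ(v) ≠ v}|. (The real matrix entries are regarded as complex numbers.) -/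
open Finset

namespace SimpleGraph

variable {V : Type*} {G : SimpleGraph V}

theorem exists_walk_support_eq_map_range (u : ℕ → V) :
    ∀ n, (∀ i < n, G.Adj (u i) (u (i + 1))) →
      ∃ p : G.Walk (u 0) (u n), p.support = (List.range (n + 1)).map u
  | 0, _ => ⟨.nil, rfl⟩
  | n + 1, hadj => by
    obtain ⟨p, hp⟩ := exists_walk_support_eq_map_range u n fun i hi => hadj i (by omega)
    refine ⟨p.concat (hadj n n.lt_succ_self), ?_⟩
    simp [Walk.support_concat, hp, List.range_succ]

theorem exists_isPath_of_injOn (u : ℕ → V) (n : ℕ) (hadj : ∀ i < n, G.Adj (u i) (u (i + 1)))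
    (hinj : Set.InjOn u (Set.Iic n)) : ∃ p : G.Walk (u 0) (u n), p.IsPath ∧ p.length = n := by
  obtain ⟨p, hp⟩ := exists_walk_support_eq_map_range u n hadj
  refine ⟨p, Walk.IsPath.mk' ?_, ?_⟩
  · rw [hp]
    exact List.nodup_range.map_on fun i hi j hj => hinj (by simpa [Nat.lt_succ_iff] using hi)
      (by simpa [Nat.lt_succ_iff] using hj)
  · simpa [hp] using p.length_support.symm

theorem IsAcyclic.eq_one_of_injOn (hG : G.IsAcyclic) {u : ℕ → V} {n : ℕ}
    (hadj : ∀ i < n, G.Adj (u i) (u (i + 1))) (hinj : Set.InjOn u (Set.Iic n))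
    (hclose : G.Adj (u n) (u 0)) : n = 1 := by
  obtain ⟨p, hp, hlen⟩ := exists_isPath_of_injOn u n hadj hinj
  let e : G.Walk (u 0) (u n) := .cons hclose.symm .nil
  have he : e.IsPath := by simp [e, hclose.ne']
  have hpe : (⟨p, hp⟩ : G.Path (u 0) (u n)) = ⟨e, he⟩ := (hG.subsingleton_path _ _).elim _ _
  simpa [e, hlen] using congrArg (fun r : G.Path (u 0) (u n) => r.1.length) hpe

theorem IsAcyclic.apply_apply_eq_self [Finite V] (hG : G.IsAcyclic) {ψ : Equiv.Perm V}
    (hψ : ∀ v, ψ v ≠ v → G.Adj v (ψ v)) (v : V) : ψ (ψ v) = v := by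
  by_cases hv : ψ v = v
  · rw [hv, hv]
  have hmoved (i : ℕ) : ψ (ψ^[i] v) ≠ ψ^[i] v := fun h => hv <|
    ψ.injective.iterate i (by rwa [← Function.iterate_succ_apply, Function.iterate_succ_apply'])
  have hstep (i : ℕ) : G.Adj (ψ^[i] v) (ψ^[i + 1] v) := by
    simpa only [Function.iterate_succ_apply'] using hψ _ (hmoved i)
  set k := Function.minimalPeriod ψ v
  have hk : 0 < k := Function.minimalPeriod_pos_of_mem_periodicPts (ψ.injective.mem_periodicPts v)
  have hperiod : ψ^[k] v = v := Function.isPeriodicPt_minimalPeriod ψ v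
  have hk_pred : k - 1 = 1 := by
    refine hG.eq_one_of_injOn (u := (ψ^[·] v)) (fun i _ => hstep i)
      (Function.iterate_injOn_Iio_minimalPeriod.mono fun i hi => ?_) ?_
    · simp only [Set.mem_Iic, Set.mem_Iio] at hi ⊢; omega
    · simpa [Nat.sub_add_cancel hk, hperiod] using hstep (k - 1)
  rwa [show k = 2 by omega] at hperiod

end SimpleGraph

section qLap

variable {V : Type} [Fintype V] [DecidableEq V] {G : SimpleGraph V} [DecidableRel G.Adj] {q : ℝ}

theorem qLap_apply_self (v : V) : qLap G q v v = 1 + q ^ 2 * ((G.degree v : ℝ) - 1) := by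
  simp [qLap, SimpleGraph.degMatrix]

theorem qLap_apply_of_ne {v w : V} (h : v ≠ w) : qLap G q v w = if G.Adj v w then -q else 0 := by
  by_cases hvw : G.Adj v w <;> simp [qLap, SimpleGraph.degMatrix, h, hvw]

theorem prod_qLap_apply_eq_zero {ψ : Equiv.Perm V} {v : V} (hv : ψ v ≠ v)
    (hnadj : ¬G.Adj v (ψ v)) : ∏ w, qLap G q w (ψ w) = 0 :=
  Finset.prod_eq_zero (Finset.mem_univ v) (by rw [qLap_apply_of_ne hv.symm, if_neg hnadj])

theorem prod_qLap_apply_of_forall_adj {ψ : Equiv.Perm V} (hψ2 : ψ * ψ = 1)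
    (hψ : ∀ v, ψ v ≠ v → G.Adj v (ψ v)) :
    ∏ v, qLap G q v (ψ v) =
      q ^ #{v | ψ v ≠ v} * ∏ v with ψ v = v, (1 + q ^ 2 * ((G.degree v : ℝ) - 1)) := by
  have hmoved : ∏ v with ψ v ≠ v, qLap G q v (ψ v) = q ^ #{v | ψ v ≠ v} := by
    have heven : Even #{v | ψ v ≠ v} :=
      even_iff_two_dvd.2 (Equiv.Perm.two_dvd_card_support (by rw [sq, hψ2]))
    rw [Finset.prod_congr rfl fun v hv => ?_, Finset.prod_const, heven.neg_pow]
    have hv := (Finset.mem_filter.1 hv).2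
    rw [qLap_apply_of_ne hv.symm, if_pos (hψ v hv)]
  have hfixed : ∏ v with ψ v = v, qLap G q v (ψ v) =
      ∏ v with ψ v = v, (1 + q ^ 2 * ((G.degree v : ℝ) - 1)) :=
    Finset.prod_congr rfl fun v hv => by rw [(Finset.mem_filter.1 hv).2, qLap_apply_self]
  rw [← Finset.prod_filter_not_mul_prod_filter Finset.univ (fun v => ψ v = v), hmoved, hfixed]

end qLap

/-- For a forest `G` and any weight function `f` on permutations, the generalized matrix
function `∑_ψ f(ψ) ∏_v 𝓛^q_{v, ψ(v)}` reduces to a sum over the involutions `ψ` all of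
whose 2-cycles are edges of `G`, the term of `ψ` being
`f(ψ) · q^{s(ψ)} · ∏_{ψ(v)=v} (1 + q²(deg(v) − 1))`. -/
theorem gmf_qLap_forest_eq_sum_over_matchings {V : Type} [Fintype V] [DecidableEq V]
    (G : SimpleGraph V) [DecidableRel G.Adj] (hG : G.IsAcyclic) (q : ℝ)
    (f : Equiv.Perm V → ℂ) :
    ∑ ψ : Equiv.Perm V, f ψ * ∏ v, ((qLap G q v (ψ v) : ℝ) : ℂ)
      = ∑ ψ ∈ Finset.univ.filter
            (fun ψ : Equiv.Perm V => ψ * ψ = 1 ∧ ∀ v, ψ v ≠ v → G.Adj v (ψ v)),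
          f ψ * (q : ℂ) ^ (Finset.univ.filter fun v => ψ v ≠ v).card *
            ∏ v ∈ Finset.univ.filter (fun v => ψ v = v),
              (1 + (q : ℂ) ^ 2 * ((G.degree v : ℂ) - 1)) := by
  simp_rw [← Complex.ofReal_prod]
  refine (Finset.sum_filter_of_ne fun ψ _ hψ => ?_).symm.trans
    (Finset.sum_congr rfl fun ψ hψ => ?_)
  · have hadj (v : V) (hv : ψ v ≠ v) : G.Adj v (ψ v) := by
      by_contra hnadj
      exact hψ (by rw [prod_qLap_apply_eq_zero hv hnadj, Complex.ofReal_zero, mul_zero])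
    exact ⟨Equiv.ext (hG.apply_apply_eq_self hadj), hadj⟩
  · obtain ⟨hψ2, hadj⟩ := (Finset.mem_filter.1 hψ).2
    rw [prod_qLap_apply_of_forall_adj hψ2 hadj]
    push_cast
    ring
end

section
/- Let G be a simple graph on a finite vertex set V that is acyclic (a forest), let q be a real number, and let 𝓛^q = I + q²(D − I) − qA be its q-Laplacian. If f and g are two functions from the permutations of V to the complex numbers that agree on every involution (i.e., f(ψ) = g(ψ) whenever ψ ∘ ψ = id), then Σ_{ψ ∈ Sym(V)} f(ψ) · ∏_{v ∈ V} 𝓛^q_{v, ψ(v)} = Σ_{ψ ∈ Sym(V)} g(ψ) · ∏_{v ∈ V} 𝓛^q_{v, ψ(v)}. In other words, the generalized matrix function of the q-Laplacian of a forest with respect to a weight function depends only on the values of the weight function at involutions. -/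
open Function

namespace SimpleGraph

variable {V : Type*} {G : SimpleGraph V}

lemma cycleGraph_minimalPeriod_isContained {ψ : Equiv.Perm V}
    (hψ : ∀ w, ψ w = w ∨ G.Adj w (ψ w)) (v : V) : cycleGraph (minimalPeriod ψ v) ⊑ G := by
  set k := minimalPeriod ψ v
  have orbit_adj (i j : Fin k) (hij : (j - i).val = 1) : G.Adj (ψ^[i] v) (ψ^[j] v) := by
    have hj : ψ^[j] v = ψ (ψ^[i] v) := by
      have : NeZero k := .of_pos i.pos
      have : j.val = (i.val + 1) % k := by
        rw [← sub_add_cancel j i, Fin.val_add, hij, add_comm]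
      rw [this, iterate_mod_minimalPeriod_eq, iterate_succ_apply']
    have hmoved : ψ (ψ^[i] v) ≠ ψ^[i] v := fun h ↦ by
      rw [← iterate_succ_apply' (⇑ψ), iterate_succ_apply] at h
      have hfix : IsFixedPt ψ v := (ψ.injective.iterate i) h
      have hlt := (j - i).isLt
      rw [hij, ← minimalPeriod_eq_one_iff_isFixedPt.mpr hfix] at hlt
      exact lt_irrefl _ hlt
    exact hj ▸ (hψ _).resolve_left hmoved
  refine ⟨⟨⟨fun i ↦ ψ^[i] v, fun {i j} hij ↦ ?_⟩,
    fun i j h ↦ Fin.ext (iterate_injOn_Iio_minimalPeriod i.2 j.2 h)⟩⟩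
  rcases cycleGraph_adj'.mp hij with h | h
  · exact (orbit_adj j i h).symm
  · exact orbit_adj i j h

lemma IsAcyclic.mul_self_eq_one_of_forall_eq_or_adj [Finite V] (hG : G.IsAcyclic)
    {ψ : Equiv.Perm V} (hψ : ∀ w, ψ w = w ∨ G.Adj w (ψ w)) : ψ * ψ = 1 := by
  ext v
  by_contra hv
  have hnot2 : ¬ minimalPeriod ψ v ∣ 2 := by
    rw [← isPeriodicPt_iff_minimalPeriod_dvd]
    exact hv
  have hpos : 0 < minimalPeriod ψ v :=
    minimalPeriod_pos_of_mem_periodicPts (ψ.injective.mem_periodicPts v)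
  have h3 : 3 ≤ minimalPeriod ψ v := by
    by_contra h
    interval_cases minimalPeriod ψ v <;> norm_num at hnot2
  exact isAcyclic_iff_free_cycleGraph.mp hG _ h3 (cycleGraph_minimalPeriod_isContained hψ v)

end SimpleGraph

lemma qLap_apply_of_ne_of_not_adj {V : Type} [Fintype V] [DecidableEq V] (G : SimpleGraph V)
    [DecidableRel G.Adj] (q : ℝ) {v w : V} (hne : v ≠ w) (hadj : ¬ G.Adj v w) :
    qLap G q v w = 0 := by
  simp [qLap, Matrix.one_apply_ne hne, SimpleGraph.degMatrix, hne, hadj]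

/-- For a forest `G`, the generalized matrix function of the `q`-Laplacian with respect to
a weight function depends only on the values of the weight function at involutions. -/
theorem gmf_qLap_forest_depends_only_on_involutions {V : Type} [Fintype V] [DecidableEq V]
    (G : SimpleGraph V) [DecidableRel G.Adj] (hG : G.IsAcyclic) (q : ℝ)
    (f g : Equiv.Perm V → ℂ) (hfg : ∀ ψ : Equiv.Perm V, ψ * ψ = 1 → f ψ = g ψ) :
    ∑ ψ : Equiv.Perm V, f ψ * ∏ v, ((qLap G q v (ψ v) : ℝ) : ℂ)
      = ∑ ψ : Equiv.Perm V, g ψ * ∏ v, ((qLap G q v (ψ v) : ℝ) : ℂ) := by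
  refine Finset.sum_congr rfl fun ψ _ ↦ ?_
  by_cases hψ : ψ * ψ = 1
  · rw [hfg ψ hψ]
  · obtain ⟨v, hmoved, hnadj⟩ : ∃ v, ψ v ≠ v ∧ ¬ G.Adj v (ψ v) := by
      by_contra! h
      exact hψ (hG.mul_self_eq_one_of_forall_eq_or_adj fun w ↦ (em _).imp_right (h w))
    have hzero : ∏ w, ((qLap G q w (ψ w) : ℝ) : ℂ) = 0 :=
      Finset.prod_eq_zero (Finset.mem_univ v) <| by
        rw [qLap_apply_of_ne_of_not_adj G q hmoved.symm hnadj, Complex.ofReal_zero]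
    rw [hzero, mul_zero, mul_zero]
end
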